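/- Let u : ℝ → ℝ be twice continuously differentiable, satisfying u''(x) = x·u(x) + 2·u(x)³ for all real x, with u(x) → 0, u'(x) → 0 and x·u(x)² → 0 as x → ∞, and such that t ↦ u(t)² and t ↦ t·u(t)² are integrable on (x, ∞) for every real x. Suppose u(x) > 0 and u'(x) < 0 for all x ≥ 0, and that √x·h(x) → 0 as x → ∞, where h(x) = ∫ₓ^∞ u(t)² dt. Define the density f(x) = h(x) · exp(-∫ₓ^∞ (t-x)·u(t)² dt). Then the function x ↦ log f(x) is concave on the set [0, ∞). -/

import Mathlib

/-!
Write `h(x) = ∫ₓ^∞ u²` and `G(x) = ∫ₓ^∞ (t - x) u(t)² dt`, so that `h' = -u²`, `G' = -h` and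
`log f = log h - G`. Then `(log f)'' = -(u² / h) ψ` with `ψ = u² / h + 2 u' / u + h`, and it
suffices to show `ψ > 0` on `[0, ∞)`.

Along Painlevé II the first integral `u'² = x u² + u⁴ + h` turns the derivative of `ψ` into
`ψ' = (u² / h) ψ - 2 h / u²`, so once `ψ ≤ 0` it stays `≤ 0`. On such a half-line the ratio
`M = h / u²` satisfies `M' = 2 r M - 1 ≥ 0` with `r = -u' / u ≥ √(x + M)`; this Riccati-type
inequality drives `M^{-1/2}` to zero in finite time, contradicting `M > 0`.
-/

open MeasureTheory Filter Set Real Topology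

theorem hasDerivAt_integral_Ioi {f : ℝ → ℝ} (hf : Continuous f)
    (hint : ∀ x, IntegrableOn f (Ioi x)) (x : ℝ) :
    HasDerivAt (fun y => ∫ t in Ioi y, f t) (-f x) x := by
  have htail : (fun y => ∫ t in Ioi y, f t) = fun y => (∫ t in Ioi 0, f t) - ∫ t in 0..y, f t := by
    funext y
    rw [← intervalIntegral.integral_Ioi_sub_Ioi' (hint 0) (hint y), sub_sub_cancel]
  rw [htail]
  exact (intervalIntegral.integral_hasDerivAt_right (hf.intervalIntegrable _ _)
    (hf.stronglyMeasurableAtFilter _ _) hf.continuousAt).const_sub _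

theorem hasDerivAt_integral_Ioi_sub_mul {f : ℝ → ℝ} (hf : Continuous f)
    (hint : ∀ x, IntegrableOn f (Ioi x)) (hint' : ∀ x, IntegrableOn (fun t => t * f t) (Ioi x))
    (x : ℝ) :
    HasDerivAt (fun y => ∫ t in Ioi y, (t - y) * f t) (-∫ t in Ioi x, f t) x := by
  have hsplit : (fun y => ∫ t in Ioi y, (t - y) * f t)
      = fun y => (∫ t in Ioi y, t * f t) - y * ∫ t in Ioi y, f t := by
    funext y
    simp_rw [sub_mul]
    rw [integral_sub (hint' y) ((hint y).const_mul y), integral_const_mul]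
  rw [hsplit]
  exact ((hasDerivAt_integral_Ioi (continuous_id.mul hf) hint' x).sub
    ((hasDerivAt_id x).mul (hasDerivAt_integral_Ioi hf hint x))).congr_deriv (by simp)

theorem integral_Ioi_pos {f : ℝ → ℝ} {x : ℝ} (hint : IntegrableOn f (Ioi x))
    (hpos : ∀ t > x, 0 < f t) : 0 < ∫ t in Ioi x, f t := by
  have hnonneg : 0 ≤ᵐ[volume.restrict (Ioi x)] f :=
    (ae_restrict_iff' measurableSet_Ioi).mpr (ae_of_all _ fun t ht => (hpos t ht).le)
  rw [setIntegral_pos_iff_support_of_nonneg_ae hnonneg hint,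
    inter_eq_right.mpr fun t (ht : t ∈ Ioi x) => Function.mem_support.mpr (hpos t ht).ne',
    volume_Ioi]
  exact ENNReal.zero_lt_top

theorem mul_sub_le_sub_of_le_hasDerivAt {f f' : ℝ → ℝ} {a b C : ℝ} (hab : a ≤ b)
    (hf : ∀ x ∈ Icc a b, HasDerivAt f (f' x) x) (hC : ∀ x ∈ Ioo a b, C ≤ f' x) :
    C * (b - a) ≤ f b - f a := by
  rcases hab.eq_or_lt with rfl | hlt
  · simp
  obtain ⟨c, hc, hslope⟩ := exists_hasDerivAt_eq_slope f f' hlt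
    (fun x hx => (hf x hx).continuousAt.continuousWithinAt)
    (fun x hx => hf x (Ioo_subset_Icc_self hx))
  exact (le_div_iff₀ (sub_pos.2 hlt)).1 (hslope ▸ hC c hc)

theorem nonpos_of_deriv_neg_of_eq_zero {f f' : ℝ → ℝ} {a : ℝ}
    (hf : ∀ x ≥ a, HasDerivAt f (f' x) x) (ha : f a ≤ 0)
    (hf' : ∀ x ≥ a, f x = 0 → f' x < 0) {x : ℝ} (hx : a ≤ x) : f x ≤ 0 :=
  image_le_of_deriv_right_lt_deriv_boundary' (B := fun _ => 0) (B' := fun _ => 0)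
    (fun y hy => (hf y hy.1).continuousAt.continuousWithinAt)
    (fun y hy => (hf y hy.1).hasDerivWithinAt) ha continuousOn_const
    (fun y _ => hasDerivWithinAt_const y _ 0) (fun y hy => hf' y hy.1) ⟨hx, le_rfl⟩

theorem false_of_sqrt_mul_le_deriv {M M' : ℝ → ℝ} {a : ℝ}
    (hM : ∀ x ≥ a, HasDerivAt M (M' x) x) (ha : 1 ≤ M a)
    (hM' : ∀ x ≥ a, √(M x) * M x ≤ M' x) : False := by
  -- `(√M)⁻¹` stays positive but decreases at rate at least `1 / 2`.
  have hge : ∀ x ≥ a, 1 ≤ M x := fun x hx => by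
    have := nonpos_of_deriv_neg_of_eq_zero (f := fun y => 1 - M y)
      (fun y hy => (hM y hy).const_sub 1) (by linarith) (fun y hy hy1 => by
        have := hM' y hy
        rw [show M y = 1 by linarith, sqrt_one] at this
        linarith) hx
    linarith
  set φ : ℝ → ℝ := fun x => (√(M x))⁻¹
  have hφ : ∀ x ≥ a, HasDerivAt φ (-(M' x / (2 * √(M x))) / √(M x) ^ 2) x := fun x hx =>
    ((hM x hx).sqrt (by linarith [hge x hx])).inv (sqrt_pos.mpr (by linarith [hge x hx])).ne'
  have hφ' : ∀ x ≥ a, 1 / 2 ≤ M' x / (2 * √(M x)) / √(M x) ^ 2 := fun x hx => by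
    have hs : 1 ≤ √(M x) := one_le_sqrt.mpr (hge x hx)
    have hsq : √(M x) ^ 2 = M x := sq_sqrt (by linarith [hge x hx])
    rw [div_div, le_div_iff₀ (by positivity)]
    nlinarith [hM' x hx]
  have hdrop := mul_sub_le_sub_of_le_hasDerivAt (f := fun x => -φ x) (C := 1 / 2)
    (by linarith : a ≤ a + 3) (fun x hx => (hφ x hx.1).neg) (fun x hx => by
      rw [neg_div, neg_neg]; exact hφ' x hx.1.le)
  have hφa : φ a ≤ 1 := inv_le_one_of_one_le₀ (one_le_sqrt.mpr ha)
  have hφpos : 0 < φ (a + 3) := inv_pos.mpr (sqrt_pos.mpr (by linarith [hge (a + 3) (by linarith)]))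
  linarith

theorem false_of_two_sqrt_mul_sub_one_le_deriv {M M' : ℝ → ℝ} {a : ℝ}
    (hM : ∀ x ≥ a, HasDerivAt M (M' x) x) (ha : 0 < M a) (hmono : ∀ x ≥ a, 0 ≤ M' x)
    (hM' : ∀ x ≥ a, 2 * √(x + M x) * M x - 1 ≤ M' x) : False := by
  -- Once `√x ≥ 1 / M a` we get `M' ≥ 1`, so `M` exceeds `1`; from then on `M' ≥ √M · M`.
  have hgrow : ∀ {C b c : ℝ}, a ≤ b → b ≤ c → (∀ x ≥ b, C ≤ M' x) → C * (c - b) ≤ M c - M b :=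
    fun hab hbc hC => mul_sub_le_sub_of_le_hasDerivAt hbc (fun x hx => hM x (hab.trans hx.1))
      fun x hx => hC x hx.1.le
  have hmonoM : ∀ {b c : ℝ}, a ≤ b → b ≤ c → M b ≤ M c := fun hab hbc => by
    linarith [hgrow hab hbc fun x hx => hmono x (hab.trans hx)]
  set b := max a ((M a)⁻¹ ^ 2)
  have hab : a ≤ b := le_max_left _ _
  have hb : (M a)⁻¹ ^ 2 ≤ b := le_max_right _ _
  have hfast : ∀ x ≥ b, 1 ≤ M' x := fun x hx => by
    have hMx : M a ≤ M x := hmonoM le_rfl (hab.trans hx)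
    have hroot : (M a)⁻¹ ≤ √(x + M x) := (le_sqrt (by positivity) (by nlinarith)).mpr (by linarith)
    have hprod : (M a)⁻¹ * M a ≤ √(x + M x) * M x :=
      mul_le_mul hroot hMx ha.le (sqrt_nonneg _)
    rw [inv_mul_cancel₀ ha.ne'] at hprod
    linarith [hM' x (hab.trans hx)]
  have hb1 : 1 ≤ M (b + 1) := by
    linarith [hgrow hab (by linarith : b ≤ b + 1) hfast, hmonoM le_rfl hab]
  refine false_of_sqrt_mul_le_deriv (a := b + 1) (fun x hx => hM x (by linarith)) hb1
    fun x hx => ?_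
  have hMx : 1 ≤ M x := hb1.trans (hmonoM (by linarith) hx)
  have hroot : √(M x) ≤ √(x + M x) := sqrt_le_sqrt (by nlinarith)
  have hone : 1 ≤ √(M x) * M x := one_le_mul_of_one_le_of_one_le (one_le_sqrt.mpr hMx) hMx
  nlinarith [hM' x (by linarith : x ≥ a), mul_le_mul_of_nonneg_right hroot (by linarith : 0 ≤ M x)]

namespace PainleveII

variable {u H : ℝ → ℝ}

theorem deriv_sq_eq (hu : Differentiable ℝ u) (hu' : Differentiable ℝ (deriv u))
    (hode : ∀ x, deriv (deriv u) x = x * u x + 2 * u x ^ 3)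
    (hH : ∀ x, HasDerivAt H (-u x ^ 2) x) (hH0 : Tendsto H atTop (𝓝 0))
    (hu0 : Tendsto u atTop (𝓝 0)) (hu'0 : Tendsto (deriv u) atTop (𝓝 0))
    (hxu : Tendsto (fun x => x * u x ^ 2) atTop (𝓝 0)) (x : ℝ) :
    deriv u x ^ 2 = x * u x ^ 2 + u x ^ 4 + H x := by
  set E : ℝ → ℝ := fun y => deriv u y ^ 2 - y * u y ^ 2 - u y ^ 4 - H y
  have hE : ∀ y, HasDerivAt E 0 y := fun y => by
    refine (((((hu' y).hasDerivAt.pow 2).sub ((hasDerivAt_id y).mul ((hu y).hasDerivAt.pow 2))).sub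
      ((hu y).hasDerivAt.pow 4)).sub (hH y)).congr_deriv ?_
    simp only [hode, id, Pi.pow_apply]
    push_cast
    ring
  have hconst := is_const_of_deriv_eq_zero (fun y => (hE y).differentiableAt) fun y => (hE y).deriv
  have hlim : Tendsto E atTop (𝓝 0) := by
    simpa using (((hu'0.pow 2).sub hxu).sub (hu0.pow 4)).sub hH0
  have hEx : E x = 0 := tendsto_nhds_unique (tendsto_const_nhds.congr fun y => hconst x y) hlim
  simp only [E] at hEx
  linarith

noncomputable def psi (u H : ℝ → ℝ) (x : ℝ) : ℝ := u x ^ 2 / H x + 2 * deriv u x / u x + H x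

theorem hasDerivAt_psi (hu : Differentiable ℝ u) (hu' : Differentiable ℝ (deriv u))
    (hode : ∀ x, deriv (deriv u) x = x * u x + 2 * u x ^ 3)
    (hH : ∀ x, HasDerivAt H (-u x ^ 2) x) {x : ℝ}
    (hfirst : deriv u x ^ 2 = x * u x ^ 2 + u x ^ 4 + H x) (hux : u x ≠ 0) (hHx : H x ≠ 0) :
    HasDerivAt (psi u H) (u x ^ 2 / H x * psi u H x - 2 * H x / u x ^ 2) x := by
  refine ((((hu x).hasDerivAt.pow 2).div (hH x) hHx).add
    (((hu' x).hasDerivAt.const_mul 2).div (hu x).hasDerivAt hux) |>.add (hH x)).congr_deriv ?_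
  simp only [psi, hode, Pi.pow_apply]
  field_simp
  linear_combination (-2 * H x ^ 2) * hfirst

theorem riccati_bounds_of_psi_nonpos {x : ℝ}
    (hfirst : deriv u x ^ 2 = x * u x ^ 2 + u x ^ 4 + H x) (hux : 0 < u x) (hHx : 0 < H x)
    (hpsi : psi u H x ≤ 0) :
    0 ≤ 2 * (-deriv u x / u x) * (H x / u x ^ 2) - 1 ∧
      √(x + H x / u x ^ 2) ≤ -deriv u x / u x := by
  have hq : u x ^ 3 + 2 * deriv u x * H x + u x * H x ^ 2 ≤ 0 := by
    have := mul_nonpos_of_nonneg_of_nonpos (mul_pos hux hHx).le hpsi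
    simp only [psi] at this
    field_simp at this
    linarith
  have hr : 0 ≤ -deriv u x / u x :=
    div_nonneg (by nlinarith [mul_pos hux (pow_pos hHx 2), pow_pos hux 3]) hux.le
  constructor
  · have hM' : 2 * (-deriv u x / u x) * (H x / u x ^ 2) - 1
        = (-2 * deriv u x * H x - u x ^ 3) / u x ^ 3 := by
      field_simp
    rw [hM']
    exact div_nonneg (by nlinarith [mul_pos hux (pow_pos hHx 2)]) (by positivity)
  · have hr2 : (-deriv u x / u x) ^ 2 = x + u x ^ 2 + H x / u x ^ 2 := by
      rw [div_pow, neg_sq, hfirst]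
      field_simp
    rw [sqrt_le_left hr, hr2]
    nlinarith

theorem psi_pos {a : ℝ} (hu : Differentiable ℝ u) (hu' : Differentiable ℝ (deriv u))
    (hode : ∀ x, deriv (deriv u) x = x * u x + 2 * u x ^ 3)
    (hH : ∀ x, HasDerivAt H (-u x ^ 2) x)
    (hfirst : ∀ x, deriv u x ^ 2 = x * u x ^ 2 + u x ^ 4 + H x)
    (hupos : ∀ x ≥ a, 0 < u x) (hHpos : ∀ x ≥ a, 0 < H x) {x : ℝ} (hx : a ≤ x) :
    0 < psi u H x := by
  by_contra! hx0
  have hneg : ∀ y ≥ x, psi u H y ≤ 0 := fun y hy =>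
    nonpos_of_deriv_neg_of_eq_zero (fun z hz => hasDerivAt_psi hu hu' hode hH (hfirst z)
      (hupos z (hx.trans hz)).ne' (hHpos z (hx.trans hz)).ne') hx0 (fun z hz hz0 => by
        have := hupos z (hx.trans hz)
        have := hHpos z (hx.trans hz)
        rw [hz0, mul_zero, zero_sub, neg_lt_zero]
        positivity) hy
  have hM : ∀ y ≥ x, HasDerivAt (fun z => H z / u z ^ 2)
      (2 * (-deriv u y / u y) * (H y / u y ^ 2) - 1) y := fun y hy => by
    have huy := (hupos y (hx.trans hy)).ne'
    refine ((hH y).div ((hu y).hasDerivAt.pow 2) (pow_ne_zero 2 huy)).congr_deriv ?_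
    simp only [Pi.pow_apply]
    field_simp
    ring
  have hbounds : ∀ y ≥ x, _ := fun y hy => riccati_bounds_of_psi_nonpos (hfirst y)
    (hupos y (hx.trans hy)) (hHpos y (hx.trans hy)) (hneg y hy)
  refine false_of_two_sqrt_mul_sub_one_le_deriv hM
    (div_pos (hHpos x hx) (pow_pos (hupos x hx) 2)) (fun y hy => (hbounds y hy).1)
    fun y hy => ?_
  have := hupos y (hx.trans hy)
  have := hHpos y (hx.trans hy)
  gcongr
  exact (hbounds y hy).2

theorem concaveOn_log_mul_exp_neg {G : ℝ → ℝ} {a : ℝ} (hu : Differentiable ℝ u)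
    (hH : ∀ x, HasDerivAt H (-u x ^ 2) x) (hG : ∀ x, HasDerivAt G (-H x) x)
    (hupos : ∀ x > a, 0 < u x) (hHpos : ∀ x ≥ a, 0 < H x) (hpsi : ∀ x > a, 0 ≤ psi u H x) :
    ConcaveOn ℝ (Ici a) fun x => log (H x * exp (-G x)) := by
  have hlog : ConcaveOn ℝ (Ici a) fun x => log (H x) - G x := by
    refine concaveOn_of_hasDerivWithinAt2_nonpos (f' := fun x => -u x ^ 2 / H x + H x)
      (f'' := fun x => -(u x ^ 2 / H x * psi u H x)) (convex_Ici a)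
      (fun x hx => (((hH x).continuousAt.log (hHpos x hx).ne').sub
        (hG x).continuousAt).continuousWithinAt) ?_ ?_ ?_ <;> rw [interior_Ici] <;> intro x hx
    · exact (((hH x).log (hHpos x hx.le).ne').sub (hG x)).hasDerivWithinAt.congr_deriv (by ring)
    · refine (((hu x).hasDerivAt.pow 2).neg.div (hH x) (hHpos x hx.le).ne' |>.add
        (hH x)).hasDerivWithinAt.congr_deriv ?_
      have := (hupos x hx).ne'
      have := (hHpos x hx.le).ne'
      simp only [psi, Pi.neg_apply, Pi.pow_apply]
      field_simp
      ring
    · have := hupos x hx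
      have := hHpos x hx.le
      have := hpsi x hx
      exact neg_nonpos.mpr (by positivity)
  exact hlog.congr fun x hx => by
    dsimp only
    rw [log_mul (hHpos x hx).ne' (exp_ne_zero _), log_exp, sub_eq_add_neg]

end PainleveII

theorem tracy_widom_density_log_concave_general (u : ℝ → ℝ) (hu : ContDiff ℝ 2 u)
    (hode : ∀ x : ℝ, deriv (deriv u) x = x * u x + 2 * (u x) ^ 3)
    (hu0 : Tendsto u atTop (nhds 0))
    (hu'0 : Tendsto (deriv u) atTop (nhds 0))
    (hxu : Tendsto (fun x : ℝ => x * (u x) ^ 2) atTop (nhds 0))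
    (hint : ∀ x : ℝ, IntegrableOn (fun t : ℝ => (u t) ^ 2) (Ioi x))
    (hint' : ∀ x : ℝ, IntegrableOn (fun t : ℝ => t * (u t) ^ 2) (Ioi x))
    (hupos : ∀ x : ℝ, 0 ≤ x → 0 < u x) :
    ConcaveOn ℝ (Ici (0 : ℝ))
      (fun x : ℝ => Real.log ((∫ t in Ioi x, (u t) ^ 2) *
        Real.exp (-∫ t in Ioi x, (t - x) * (u t) ^ 2))) := by
  have hdu : Differentiable ℝ u := hu.differentiable two_ne_zero
  have hdu' : Differentiable ℝ (deriv u) := (hu.iterate_deriv' 1 1).differentiable one_ne_zero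
  have hcont : Continuous fun t => u t ^ 2 := hdu.continuous.pow 2
  have hH := hasDerivAt_integral_Ioi hcont hint
  have hHpos : ∀ x ≥ 0, 0 < ∫ t in Ioi x, u t ^ 2 := fun x hx =>
    integral_Ioi_pos (hint x) fun t ht => pow_pos (hupos t (hx.trans ht.le)) 2
  have hfirst := PainleveII.deriv_sq_eq hdu hdu' hode hH (tendsto_integral_Ioi_zero tendsto_id)
    hu0 hu'0 hxu
  exact PainleveII.concaveOn_log_mul_exp_neg hdu hH
    (hasDerivAt_integral_Ioi_sub_mul hcont hint hint') (fun x hx => hupos x hx.le) hHpos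
    fun x hx => (PainleveII.psi_pos hdu hdu' hode hH hfirst hupos hHpos hx.le).le

/-- Deift's theorem: the density `f(x) = h(x)·exp(-∫ₓ^∞ (t-x)·u(t)² dt)` of the
Tracy–Widom distribution is log concave on `[0, ∞)`, i.e. `log ∘ f` is concave
there, where `h(x) = ∫ₓ^∞ u(t)² dt` and `u` solves Painlevé II. -/
theorem tracy_widom_density_log_concave (u : ℝ → ℝ) (hu : ContDiff ℝ 2 u)
    (hode : ∀ x : ℝ, deriv (deriv u) x = x * u x + 2 * (u x) ^ 3)
    (hu0 : Tendsto u atTop (nhds 0))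
    (hu'0 : Tendsto (deriv u) atTop (nhds 0))
    (hxu : Tendsto (fun x : ℝ => x * (u x) ^ 2) atTop (nhds 0))
    (hint : ∀ x : ℝ, IntegrableOn (fun t : ℝ => (u t) ^ 2) (Ioi x))
    (hint' : ∀ x : ℝ, IntegrableOn (fun t : ℝ => t * (u t) ^ 2) (Ioi x))
    (hupos : ∀ x : ℝ, 0 ≤ x → 0 < u x)
    (hu'neg : ∀ x : ℝ, 0 ≤ x → deriv u x < 0)
    (hdecay : Tendsto (fun x : ℝ => Real.sqrt x * ∫ t in Ioi x, (u t) ^ 2)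
      atTop (nhds 0)) :
    ConcaveOn ℝ (Ici (0 : ℝ))
      (fun x : ℝ => Real.log ((∫ t in Ioi x, (u t) ^ 2) *
        Real.exp (-∫ t in Ioi x, (t - x) * (u t) ^ 2))) :=
  tracy_widom_density_log_concave_general u hu hode hu0 hu'0 hxu hint hint' hupos
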